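/- Quasi-triangle inequality for the parabolic pseudodistance: For every t > 0 and all points γ, γ', γ'' in the cosphere bundle S*(ℝ^d) = ℝ^d × S^{d−1}, one has d_t(γ; γ'') ≤ 4 d_t(γ; γ') + 4 d_t(γ'; γ''). -/

import Mathlib

/-!
Split `x - x'' = (x - x') + (x' - x'')`. Each inner-product term of `d_t(γ; γ'')` is bounded
by the corresponding terms of `d_t(γ; γ')` and `d_t(γ'; γ'')` plus a cross term
`‖ν - ν'‖ ‖x' - x''‖` coming from changing the covector; AM-GM with weights `t`, `t⁻¹` absorbs
that cross term into the two quadratic terms. The quadratic terms of `d_t(γ; γ'')` cost a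
factor `2` by `(a + b)² ≤ 2 (a² + b²)`, so the inequality even holds with `5/2` in place of `4`.
-/

open scoped ENNReal

noncomputable section

/-- Euclidean space `ℝ^d`. -/
abbrev Rd (d : ℕ) : Type := EuclideanSpace ℝ (Fin d)

/-- The parabolic pseudodistance `d_t` on the cosphere bundle
`S^*(ℝ^d) = ℝ^d × S^{d-1}`, defined on pairs `γ = (x,ν)`:
`d_t(x,ν; x',ν') = |⟨ν, x-x'⟩| + |⟨ν', x-x'⟩| + t|ν-ν'|² + t⁻¹|x-x'|²`. -/
def cosDist {d : ℕ} (t : ℝ) (γ γ' : Rd d × Rd d) : ℝ :=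
  |(inner ℝ γ.2 (γ.1 - γ'.1) : ℝ)| + |(inner ℝ γ'.2 (γ.1 - γ'.1) : ℝ)|
    + t * ‖γ.2 - γ'.2‖ ^ 2 + t⁻¹ * ‖γ.1 - γ'.1‖ ^ 2

open scoped RealInnerProductSpace

lemma two_mul_mul_le_mul_sq_add_inv_mul_sq {t : ℝ} (ht : 0 < t) (a b : ℝ) :
    2 * (a * b) ≤ t * a ^ 2 + t⁻¹ * b ^ 2 := by
  have key : t * a ^ 2 + t⁻¹ * b ^ 2 - 2 * (a * b) = t⁻¹ * (t * a - b) ^ 2 := by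
    field_simp
    ring
  linarith [mul_nonneg (inv_nonneg.2 ht.le) (sq_nonneg (t * a - b))]

lemma norm_sub_sq_le {E : Type*} [SeminormedAddGroup E] (a b c : E) :
    ‖a - c‖ ^ 2 ≤ 2 * (‖a - b‖ ^ 2 + ‖b - c‖ ^ 2) :=
  (pow_le_pow_left₀ (norm_nonneg _) (norm_sub_le_norm_sub_add_norm_sub a b c) 2).trans add_sq_le

lemma abs_inner_add_le {E : Type*} [NormedAddCommGroup E] [InnerProductSpace ℝ E]
    (ν ν' u v : E) :
    |⟪ν, u + v⟫| ≤ |⟪ν, u⟫| + |⟪ν', v⟫| + ‖ν - ν'‖ * ‖v‖ := by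
  have decomp : ⟪ν, u + v⟫ = ⟪ν, u⟫ + ⟪ν', v⟫ + ⟪ν - ν', v⟫ := by
    rw [inner_add_right, inner_sub_left]
    ring
  rw [decomp]
  exact (abs_add_le _ _).trans <|
    add_le_add (abs_add_le _ _) (abs_real_inner_le_norm _ _)

theorem cosDist_quasi_triangle_general {d : ℕ} (t : ℝ) (ht : 0 < t)
    (γ γ' γ'' : Rd d × Rd d) :
    cosDist t γ γ'' ≤ 4 * cosDist t γ γ' + 4 * cosDist t γ' γ'' := by
  obtain ⟨x, ν⟩ := γ
  obtain ⟨x', ν'⟩ := γ'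
  obtain ⟨x'', ν''⟩ := γ''
  have hx : x - x'' = (x - x') + (x' - x'') := (sub_add_sub_cancel x x' x'').symm
  have hx' : x - x'' = (x' - x'') + (x - x') := by rw [hx, add_comm]
  have inner₁ := abs_inner_add_le ν ν' (x - x') (x' - x'')
  have inner₂ := abs_inner_add_le ν'' ν' (x' - x'') (x - x')
  rw [← hx] at inner₁
  rw [← hx', norm_sub_rev ν''] at inner₂
  have cross₁ := two_mul_mul_le_mul_sq_add_inv_mul_sq ht ‖ν - ν'‖ ‖x' - x''‖
  have cross₂ := two_mul_mul_le_mul_sq_add_inv_mul_sq ht ‖ν' - ν''‖ ‖x - x'‖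
  have quadν := mul_le_mul_of_nonneg_left (norm_sub_sq_le ν ν' ν'') ht.le
  have hti : 0 ≤ t⁻¹ := inv_nonneg.2 ht.le
  have quadx := mul_le_mul_of_nonneg_left (norm_sub_sq_le x x' x'') hti
  simp only [cosDist]
  linarith [abs_nonneg ⟪ν, x - x'⟫, abs_nonneg ⟪ν', x - x'⟫, abs_nonneg ⟪ν', x' - x''⟫,
    abs_nonneg ⟪ν'', x' - x''⟫, mul_nonneg ht.le (sq_nonneg ‖ν - ν'‖),
    mul_nonneg ht.le (sq_nonneg ‖ν' - ν''‖), mul_nonneg hti (sq_nonneg ‖x - x'‖),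
    mul_nonneg hti (sq_nonneg ‖x' - x''‖)]

/-- **Quasi-triangle inequality for the parabolic pseudodistance.**
For every `t > 0` and all points `γ, γ', γ''` of the cosphere bundle
`S^*(ℝ^d) = ℝ^d × S^{d-1}`, one has
`d_t(γ; γ'') ≤ 4 d_t(γ; γ') + 4 d_t(γ'; γ'')`. -/
theorem cosDist_quasi_triangle {d : ℕ} (t : ℝ) (ht : 0 < t)
    (γ γ' γ'' : Rd d × Rd d)
    (hγ : ‖γ.2‖ = 1) (hγ' : ‖γ'.2‖ = 1) (hγ'' : ‖γ''.2‖ = 1) :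
    cosDist t γ γ'' ≤ 4 * cosDist t γ γ' + 4 * cosDist t γ' γ'' :=
  cosDist_quasi_triangle_general t ht γ γ' γ''

end
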